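/- arXiv:1809.09178 — 2 statements merged into one kernel-verified Lean document; each statement's English description precedes it below -/
import Mathlib

section
/- Let Ω ⊆ ℝ³ be a connected open set, let ε be a twice continuously differentiable symmetric 3×3 matrix field on Ω satisfying the St.-Venant compatibility condition, and set E_{ikl} := ε_{il,k} − ε_{kl,i}. Suppose ω₁ and ω₂ are continuously differentiable skew-symmetric matrix fields on Ω, each satisfying ∂_l (ω_a)_{ik} = E_{ikl} on Ω (a = 1,2). Then for any two C¹ loops γ₀, γ₁ that are freely homotopic in Ω and for each i ∈ {1,2,3}: ∫₀¹ Σ_k (ε_{ik} + (ω₁)_{ik})(γ₀(t)) (γ₀)'_k(t) dt = ∫₀¹ Σ_k (ε_{ik} + (ω₂)_{ik})(γ₁(t)) (γ₁)'_k(t) dt. (In particular, the Burgers vector of a dislocation is well defined, independent of the choice of rotation field and of the loop within its free homotopy class.) -/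
/-!
Fix `i`. The 1-form `α = ∑ₖ (ε_{ik} + ω_{ik}) dxₖ` is closed: by the gradient condition
`∂ₗ(ε_{ik} + ω_{ik}) = ε_{ik,l} + ε_{il,k} − ε_{kl,i}`, which is symmetric in `k, l` because `ε` is.
By the Poincaré lemma `α` has a primitive on every ball in `Ω`. Cut the homotopy square into a
grid so fine (a Lebesgue number argument) that every cell is mapped into such a ball; the
integral of `α` along a level of the homotopy is then a sum of increments of local primitives.
Primitives on neighbouring balls differ by a constant on their convex overlap, so this sum is the
same whether computed with the primitives of the row of cells below or above a level of the grid,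
and, by periodicity in `t`, the same at the bottom and at the top of each row of cells.
Finally `∇(ω₁ − ω₂) = E − E = 0`, so on the connected set `Ω` the forms built from `ω₁` and `ω₂`
differ by a constant form, whose integral over a closed loop vanishes.
-/

noncomputable section

open Matrix

/-- Points of 3-d Euclidean space, as triples of reals. -/
abbrev E3 : Type := Fin 3 → ℝ

/-- Partial derivative `∂_j f` of a scalar field `f` at `x`. -/
noncomputable def pd (j : Fin 3) (f : E3 → ℝ) (x : E3) : ℝ :=
  fderiv ℝ f x (Pi.single j 1)

/-- The St.-Venant compatibility condition for a matrix field `ε` on `Ω`. -/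
def StVenant (ε : Fin 3 → Fin 3 → E3 → ℝ) (Ω : Set E3) : Prop :=
  ∀ x ∈ Ω, ∀ i k l m : Fin 3,
    pd m (pd k (ε i l)) x - pd m (pd i (ε k l)) x
      - pd l (pd k (ε i m)) x + pd l (pd i (ε k m)) x = 0

/-- The field `E_{ikl} := ε_{il,k} − ε_{kl,i}` derived from a strain field `ε`. -/
noncomputable def Efield (ε : Fin 3 → Fin 3 → E3 → ℝ) (i k l : Fin 3) (x : E3) : ℝ :=
  pd k (ε i l) x - pd i (ε k l) x

/-- A C¹ loop in `Ω`: a continuously differentiable map `γ : [0,1] → Ω` with `γ 0 = γ 1`. -/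
def IsC1LoopIn (γ : ℝ → E3) (Ω : Set E3) : Prop :=
  ContDiffOn ℝ 1 γ (Set.Icc 0 1) ∧ (∀ t ∈ Set.Icc (0:ℝ) 1, γ t ∈ Ω) ∧ γ 0 = γ 1

/-- Free homotopy of loops within `Ω`. -/
def FreelyHomotopicIn (γ₀ γ₁ : ℝ → E3) (Ω : Set E3) : Prop :=
  ∃ Hom : ℝ × ℝ → E3,
    ContinuousOn Hom (Set.Icc 0 1 ×ˢ Set.Icc 0 1) ∧
    (∀ p ∈ (Set.Icc (0:ℝ) 1 ×ˢ Set.Icc (0:ℝ) 1), Hom p ∈ Ω) ∧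
    (∀ t ∈ Set.Icc (0:ℝ) 1, Hom (0, t) = γ₀ t) ∧
    (∀ t ∈ Set.Icc (0:ℝ) 1, Hom (1, t) = γ₁ t) ∧
    (∀ s ∈ Set.Icc (0:ℝ) 1, Hom (s, 0) = Hom (s, 1))

open Set Metric MeasureTheory

structure IsClosedOneFormOn {E : Type*} [NormedAddCommGroup E] [NormedSpace ℝ E]
    (ω : E → E →L[ℝ] ℝ) (Ω : Set E) : Prop where
  differentiableOn : DifferentiableOn ℝ ω Ω
  fderiv_symm : ∀ x ∈ Ω, ∀ u v, fderiv ℝ ω x u v = fderiv ℝ ω x v u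

theorem IsCompact.exists_forall_mapsTo_ball {α β : Type*} [PseudoMetricSpace α]
    [PseudoMetricSpace β] {X : Set α} (hX : IsCompact X) {f : α → β} (hf : ContinuousOn f X)
    {Ω : Set β} (hΩ : IsOpen Ω) (hfΩ : MapsTo f X Ω) :
    ∃ δ > 0, ∃ η > 0, ∀ x ∈ X, ball (f x) δ ⊆ Ω ∧ ∀ y ∈ X, dist x y < η → f y ∈ ball (f x) δ := by
  obtain ⟨δ, hδ, hδΩ⟩ :=
    (hX.image_of_continuousOn hf).exists_thickening_subset_open hΩ (image_subset_iff.2 hfΩ)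
  obtain ⟨η, hη, hfη⟩ :=
    Metric.uniformContinuousOn_iff.1 (hX.uniformContinuousOn_of_continuous hf) δ hδ
  refine ⟨δ, hδ, η, hη, fun x hx => ⟨(ball_subset_thickening (mem_image_of_mem f hx) δ).trans hδΩ,
    fun y hy hxy => ?_⟩⟩
  rw [mem_ball, dist_comm]
  exact hfη x hx y hy hxy

theorem exists_grid_mapsTo_ball {β : Type*} [PseudoMetricSpace β] {H : ℝ × ℝ → β} {Ω : Set β}
    (hΩ : IsOpen Ω) (hH : ContinuousOn H (Icc 0 1 ×ˢ Icc 0 1))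
    (hHΩ : MapsTo H (Icc 0 1 ×ˢ Icc 0 1) Ω) :
    ∃ N : ℕ, 0 < N ∧ ∃ δ : ℝ, ∀ j < N, ∀ k < N,
      ball (H (j / N, k / N)) δ ⊆ Ω ∧
      MapsTo H (Icc (j / N : ℝ) ((j + 1 : ℕ) / N) ×ˢ Icc (k / N : ℝ) ((k + 1 : ℕ) / N))
        (ball (H (j / N, k / N)) δ) := by
  obtain ⟨δ, -, η, hη, hball⟩ :=
    (isCompact_Icc.prod isCompact_Icc).exists_forall_mapsTo_ball hH hΩ hHΩ
  obtain ⟨n, hn⟩ := exists_nat_one_div_lt hη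
  have hN : (0 : ℝ) < (n + 1 : ℕ) := by positivity
  have hcell : ∀ k < n + 1, ∀ t ∈ Icc (k / (n + 1 : ℕ) : ℝ) ((k + 1 : ℕ) / (n + 1 : ℕ)),
      t ∈ Icc (0 : ℝ) 1 ∧ dist (k / (n + 1 : ℕ) : ℝ) t < η := by
    intro k hk t ht
    refine ⟨⟨le_trans (by positivity) ht.1, ht.2.trans ((div_le_one hN).2 (by exact_mod_cast hk))⟩,
      ?_⟩
    rw [Real.dist_eq, abs_sub_comm, abs_of_nonneg (sub_nonneg.2 ht.1)]
    calc t - k / (n + 1 : ℕ) ≤ (k + 1 : ℕ) / (n + 1 : ℕ) - k / (n + 1 : ℕ) := by linarith [ht.2]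
      _ = 1 / (n + 1) := by push_cast; ring
      _ < η := hn
  have hleft : ∀ k : ℕ,
      (k / (n + 1 : ℕ) : ℝ) ∈ Icc (k / (n + 1 : ℕ) : ℝ) ((k + 1 : ℕ) / (n + 1 : ℕ)) :=
    fun k => left_mem_Icc.2 (by gcongr; simp)
  refine ⟨n + 1, n.succ_pos, δ, fun j hj k hk => ?_⟩
  have hcorner := hball ((j : ℝ) / (n + 1 : ℕ), (k : ℝ) / (n + 1 : ℕ))
    ⟨(hcell j hj _ (hleft j)).1, (hcell k hk _ (hleft k)).1⟩
  refine ⟨hcorner.1, fun p hp => hcorner.2 p ⟨(hcell j hj _ hp.1).1, (hcell k hk _ hp.2).1⟩ ?_⟩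
  rw [Prod.dist_eq]
  exact max_lt (hcell j hj _ hp.1).2 (hcell k hk _ hp.2).2

section OneForms

variable {E : Type*} [NormedAddCommGroup E] [NormedSpace ℝ E]

theorem IsClosedOneFormOn.exists_forall_hasFDerivAt_of_convex {ω : E → E →L[ℝ] ℝ} {Ω B : Set E}
    (hω : IsClosedOneFormOn ω Ω) (hBc : Convex ℝ B) (hBo : IsOpen B) (hBΩ : B ⊆ Ω) :
    ∃ g : E → ℝ, ∀ x ∈ B, HasFDerivAt g (ω x) x :=
  hBc.exists_forall_hasFDerivAt_of_fderiv_symmetric hBo (hω.differentiableOn.mono hBΩ)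
    fun x hx => hω.fderiv_symm x (hBΩ hx)

theorem sub_eq_sub_of_hasFDerivAt_of_convex {ω : E → E →L[ℝ] ℝ} {g g' : E → ℝ} {B B' : Set E}
    (hBc : Convex ℝ B) (hBo : IsOpen B) (hB'c : Convex ℝ B') (hB'o : IsOpen B')
    (hg : ∀ x ∈ B, HasFDerivAt g (ω x) x) (hg' : ∀ x ∈ B', HasFDerivAt g' (ω x) x)
    {x y : E} (hx : x ∈ B ∩ B') (hy : y ∈ B ∩ B') : g y - g x = g' y - g' x := by
  obtain ⟨c, hc⟩ := (hBo.inter hB'o).exists_eq_add_of_fderiv_eq (hBc.inter hB'c).isPreconnected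
    (fun z hz => (hg z hz.1).differentiableAt.differentiableWithinAt)
    (fun z hz => (hg' z hz.2).differentiableAt.differentiableWithinAt)
    (fun z hz => by rw [(hg z hz.1).fderiv, (hg' z hz.2).fderiv])
  rw [hc hx, hc hy]
  ring

theorem sum_sub_eq_sum_sub_of_cyclic_chain {ω : E → E →L[ℝ] ℝ} {n : ℕ} {B : ℕ → Set E}
    (hBc : ∀ k, Convex ℝ (B k)) (hBo : ∀ k, IsOpen (B k)) {g : ℕ → E → ℝ}
    (hg : ∀ k ≤ n, ∀ x ∈ B k, HasFDerivAt (g k) (ω x) x) {p q : ℕ → E}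
    (hp : ∀ k ≤ n, p k ∈ B k ∧ p (k + 1) ∈ B k) (hq : ∀ k ≤ n, q k ∈ B k ∧ q (k + 1) ∈ B k)
    (hpn : p (n + 1) = p 0) (hqn : q (n + 1) = q 0) :
    ∑ k ∈ Finset.range (n + 1), (g k (q (k + 1)) - g k (q k)) =
      ∑ k ∈ Finset.range (n + 1), (g k (p (k + 1)) - g k (p k)) := by
  set c : ℕ → ℝ := fun k => g k (q k) - g k (p k)
  set c' : ℕ → ℝ := fun k => g k (q (k + 1)) - g k (p (k + 1))
  have hshift : ∀ k < n, c' k = c (k + 1) := fun k hk =>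
    sub_eq_sub_of_hasFDerivAt_of_convex (hBc k) (hBo k) (hBc (k + 1)) (hBo (k + 1))
      (hg k hk.le) (hg (k + 1) hk) ⟨(hp k hk.le).2, (hp (k + 1) hk).1⟩
      ⟨(hq k hk.le).2, (hq (k + 1) hk).1⟩
  have hwrap : c' n = c 0 := by
    have := sub_eq_sub_of_hasFDerivAt_of_convex (hBc n) (hBo n) (hBc 0) (hBo 0)
      (hg n le_rfl) (hg 0 n.zero_le) ⟨hpn ▸ (hp n le_rfl).2, (hp 0 n.zero_le).1⟩
      ⟨hqn ▸ (hq n le_rfl).2, (hq 0 n.zero_le).1⟩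
    simpa only [c, c', hpn, hqn] using this
  have hsum : ∑ k ∈ Finset.range (n + 1), c' k = ∑ k ∈ Finset.range (n + 1), c k := by
    rw [Finset.sum_range_succ, Finset.sum_range_succ', hwrap,
      Finset.sum_congr rfl fun k hk => hshift k (Finset.mem_range.1 hk)]
  have hsplit : ∀ k, g k (q (k + 1)) - g k (q k) = (g k (p (k + 1)) - g k (p k)) + (c' k - c k) :=
    fun k => by simp only [c, c']; ring
  simp only [hsplit, Finset.sum_add_distrib, Finset.sum_sub_distrib, hsum, sub_self, add_zero]

theorem intervalIntegrable_apply_deriv {ω : E → E →L[ℝ] ℝ} {Ω : Set E} {γ : ℝ → E}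
    (hω : ContinuousOn ω Ω) (hγ : ContDiffOn ℝ 1 γ (Icc 0 1)) (hγΩ : MapsTo γ (Icc 0 1) Ω) :
    IntervalIntegrable (fun t => ω (γ t) (deriv γ t)) volume 0 1 := by
  have hcont : ContinuousOn (fun t => ω (γ t) (derivWithin γ (Icc 0 1) t)) (Icc 0 1) :=
    (hω.comp hγ.continuousOn hγΩ).clm_apply
      (hγ.continuousOn_derivWithin (uniqueDiffOn_Icc zero_lt_one) le_rfl)
  refine (hcont.intervalIntegrable_of_Icc zero_le_one).congr_uIoo fun t ht => ?_
  rw [uIoo_of_le zero_le_one] at ht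
  simp only [derivWithin_of_mem_nhds (Icc_mem_nhds ht.1 ht.2)]

theorem integral_apply_deriv_eq_sum_sub {ω : E → E →L[ℝ] ℝ} {Ω : Set E} {γ : ℝ → E}
    (hω : ContinuousOn ω Ω) (hγ : ContDiffOn ℝ 1 γ (Icc 0 1)) (hγΩ : MapsTo γ (Icc 0 1) Ω)
    {N : ℕ} {a : ℕ → ℝ} (ha : Monotone a) (ha0 : a 0 = 0) (haN : a N = 1)
    {B : ℕ → Set E} {g : ℕ → E → ℝ} (hγB : ∀ k < N, MapsTo γ (Icc (a k) (a (k + 1))) (B k))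
    (hg : ∀ k < N, ∀ x ∈ B k, HasFDerivAt (g k) (ω x) x) :
    ∫ t in (0 : ℝ)..1, ω (γ t) (deriv γ t) =
      ∑ k ∈ Finset.range N, (g k (γ (a (k + 1))) - g k (γ (a k))) := by
  have hsub : ∀ k < N, Icc (a k) (a (k + 1)) ⊆ Icc 0 1 := fun k hk =>
    Icc_subset_Icc (ha0 ▸ ha k.zero_le) (haN ▸ ha hk)
  have hpiece : ∀ k < N,
      IntervalIntegrable (fun t => ω (γ t) (deriv γ t)) volume (a k) (a (k + 1)) := fun k hk =>
    (intervalIntegrable_apply_deriv hω hγ hγΩ).mono_set (by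
      rw [uIcc_of_le (ha k.le_succ), uIcc_of_le zero_le_one]; exact hsub k hk)
  calc ∫ t in (0 : ℝ)..1, ω (γ t) (deriv γ t) = ∫ t in a 0..a N, ω (γ t) (deriv γ t) := by
        rw [ha0, haN]
    _ = _ := (intervalIntegral.sum_integral_adjacent_intervals hpiece).symm
    _ = _ := by
      refine Finset.sum_congr rfl fun k hk => ?_
      have hk := Finset.mem_range.1 hk
      refine intervalIntegral.integral_eq_sub_of_hasDeriv_right_of_le (ha k.le_succ)
        (ContinuousOn.comp (fun x hx => (hg k hk x hx).continuousAt.continuousWithinAt)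
          (hγ.continuousOn.mono (hsub k hk)) (hγB k hk)) (fun t ht => ?_) (hpiece k hk)
      have htI : Icc (0 : ℝ) 1 ∈ nhds t :=
        Icc_mem_nhds ((hsub k hk (left_mem_Icc.2 (ha k.le_succ))).1.trans_lt ht.1)
          (ht.2.trans_le (hsub k hk (right_mem_Icc.2 (ha k.le_succ))).2)
      have hγt := ((hγ.contDiffAt htI).differentiableAt one_ne_zero).hasDerivAt
      exact ((hg k hk _ (hγB k hk (Ioo_subset_Icc_self ht))).comp_hasDerivAt t hγt).hasDerivWithinAt

theorem integral_apply_deriv_eq_of_eq_add_const {ω₁ ω₂ : E → E →L[ℝ] ℝ} {Ω : Set E} {γ : ℝ → E}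
    (hω₂ : ContinuousOn ω₂ Ω) (C : E →L[ℝ] ℝ) (hC : ∀ x ∈ Ω, ω₁ x = ω₂ x + C)
    (hγ : ContDiffOn ℝ 1 γ (Icc 0 1)) (hγΩ : MapsTo γ (Icc 0 1) Ω) (hγ01 : γ 0 = γ 1) :
    ∫ t in (0 : ℝ)..1, ω₁ (γ t) (deriv γ t) = ∫ t in (0 : ℝ)..1, ω₂ (γ t) (deriv γ t) := by
  have hCγ : ∫ t in (0 : ℝ)..1, C (deriv γ t) = 0 := by
    have := integral_apply_deriv_eq_sum_sub (ω := fun _ => C) continuousOn_const hγ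
      (mapsTo_univ _ _) (N := 1) (a := fun k => k) Nat.mono_cast (by simp) (by simp)
      (B := fun _ => univ) (g := fun _ => C) (fun _ _ => mapsTo_univ _ _)
      (fun _ _ _ _ => C.hasFDerivAt)
    simpa [hγ01] using this
  calc ∫ t in (0 : ℝ)..1, ω₁ (γ t) (deriv γ t)
      = ∫ t in (0 : ℝ)..1, (ω₂ (γ t) (deriv γ t) + C (deriv γ t)) :=
        intervalIntegral.integral_congr fun t ht => by
          rw [uIcc_of_le zero_le_one] at ht
          simp [hC _ (hγΩ ht)]
    _ = ∫ t in (0 : ℝ)..1, ω₂ (γ t) (deriv γ t) := by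
      rw [intervalIntegral.integral_add (intervalIntegrable_apply_deriv hω₂ hγ hγΩ)
        (intervalIntegrable_apply_deriv (ω := fun _ => C) continuousOn_const hγ
          (mapsTo_univ _ _)), hCγ, add_zero]

theorem sum_sub_eq_sum_sub_of_grid {ω : E → E →L[ℝ] ℝ} {n : ℕ} {a : ℕ → ℝ} (ha : Monotone a)
    {H : ℝ × ℝ → E} {B : ℕ → ℕ → Set E} (hBc : ∀ j k, Convex ℝ (B j k))
    (hBo : ∀ j k, IsOpen (B j k)) {g : ℕ → ℕ → E → ℝ}
    (hg : ∀ j ≤ n, ∀ k ≤ n, ∀ x ∈ B j k, HasFDerivAt (g j k) (ω x) x)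
    (hHB : ∀ j ≤ n, ∀ k ≤ n, MapsTo H (Icc (a j) (a (j + 1)) ×ˢ Icc (a k) (a (k + 1))) (B j k))
    (hHper : ∀ j ≤ n + 1, H (a j, a (n + 1)) = H (a j, a 0)) :
    ∑ k ∈ Finset.range (n + 1), (g n k (H (a (n + 1), a (k + 1))) - g n k (H (a (n + 1), a k))) =
      ∑ k ∈ Finset.range (n + 1), (g 0 k (H (a 0, a (k + 1))) - g 0 k (H (a 0, a k))) := by
  set S : ℕ → ℕ → ℝ := fun j m =>
    ∑ k ∈ Finset.range (n + 1), (g j k (H (a m, a (k + 1))) - g j k (H (a m, a k)))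
  have hleft : ∀ k, a k ∈ Icc (a k) (a (k + 1)) := fun k => left_mem_Icc.2 (ha k.le_succ)
  have hright : ∀ k, a (k + 1) ∈ Icc (a k) (a (k + 1)) := fun k => right_mem_Icc.2 (ha k.le_succ)
  have hrow : ∀ j ≤ n, S j (j + 1) = S j j := fun j hj =>
    sum_sub_eq_sum_sub_of_cyclic_chain (hBc j) (hBo j) (hg j hj)
      (p := fun k => H (a j, a k)) (q := fun k => H (a (j + 1), a k))
      (fun k hk => ⟨hHB j hj k hk ⟨hleft j, hleft k⟩, hHB j hj k hk ⟨hleft j, hright k⟩⟩)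
      (fun k hk => ⟨hHB j hj k hk ⟨hright j, hleft k⟩, hHB j hj k hk ⟨hright j, hright k⟩⟩)
      (hHper j (by omega)) (hHper (j + 1) (by omega))
  have hstep : ∀ j < n, S (j + 1) (j + 1) = S j (j + 1) := fun j hj =>
    Finset.sum_congr rfl fun k hk => by
      have hk := Nat.le_of_lt_succ (Finset.mem_range.1 hk)
      exact sub_eq_sub_of_hasFDerivAt_of_convex (hBc _ _) (hBo _ _) (hBc _ _) (hBo _ _)
        (hg (j + 1) hj k hk) (hg j hj.le k hk)
        ⟨hHB (j + 1) hj k hk ⟨hleft _, hleft k⟩, hHB j hj.le k hk ⟨hright j, hleft k⟩⟩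
        ⟨hHB (j + 1) hj k hk ⟨hleft _, hright k⟩, hHB j hj.le k hk ⟨hright j, hright k⟩⟩
  have hind : ∀ j ≤ n, S j (j + 1) = S 0 0 := by
    intro j hj
    induction j with
    | zero => exact hrow 0 hj
    | succ j ih => rw [hrow (j + 1) hj, hstep j hj, ih (by omega)]
  exact hind n le_rfl

theorem IsClosedOneFormOn.integral_apply_deriv_eq_of_homotopy {ω : E → E →L[ℝ] ℝ} {Ω : Set E}
    (hΩ : IsOpen Ω) (hω : IsClosedOneFormOn ω Ω) {γ₀ γ₁ : ℝ → E} (hγ₀ : ContDiffOn ℝ 1 γ₀ (Icc 0 1))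
    (hγ₁ : ContDiffOn ℝ 1 γ₁ (Icc 0 1)) {H : ℝ × ℝ → E}
    (hH : ContinuousOn H (Icc 0 1 ×ˢ Icc 0 1)) (hHΩ : MapsTo H (Icc 0 1 ×ˢ Icc 0 1) Ω)
    (hH₀ : ∀ t ∈ Icc (0 : ℝ) 1, H (0, t) = γ₀ t) (hH₁ : ∀ t ∈ Icc (0 : ℝ) 1, H (1, t) = γ₁ t)
    (hHper : ∀ s ∈ Icc (0 : ℝ) 1, H (s, 0) = H (s, 1)) :
    ∫ t in (0 : ℝ)..1, ω (γ₀ t) (deriv γ₀ t) = ∫ t in (0 : ℝ)..1, ω (γ₁ t) (deriv γ₁ t) := by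
  obtain ⟨N, hN, δ, hcell⟩ := exists_grid_mapsTo_ball hΩ hH hHΩ
  obtain ⟨n, rfl⟩ := Nat.exists_eq_add_one_of_ne_zero hN.ne'
  set a : ℕ → ℝ := fun k => k / (n + 1 : ℕ)
  have ha : Monotone a := fun i j hij => by simp only [a]; gcongr
  have ha0 : a 0 = 0 := by simp [a]
  have haN : a (n + 1) = 1 := div_self (by positivity)
  have hsub : ∀ k ≤ n, Icc (a k) (a (k + 1)) ⊆ Icc 0 1 := fun k hk =>
    Icc_subset_Icc (ha0 ▸ ha k.zero_le) (haN ▸ ha (by omega))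
  choose! g hg using fun j k (hj : j ≤ n) (hk : k ≤ n) =>
    hω.exists_forall_hasFDerivAt_of_convex (convex_ball _ δ) isOpen_ball
      (hcell j (by omega) k (by omega)).1
  have hedge : ∀ j ≤ n, ∀ s ∈ Icc (a j) (a (j + 1)), ∀ γ : ℝ → E, ContDiffOn ℝ 1 γ (Icc 0 1) →
      (∀ t ∈ Icc (0 : ℝ) 1, H (s, t) = γ t) → ∫ t in (0 : ℝ)..1, ω (γ t) (deriv γ t) =
        ∑ k ∈ Finset.range (n + 1), (g j k (H (s, a (k + 1))) - g j k (H (s, a k))) := by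
    intro j hj s hs γ hγ hHγ
    rw [integral_apply_deriv_eq_sum_sub hω.differentiableOn.continuousOn hγ
      (fun t ht => hHγ t ht ▸ hHΩ ⟨hsub j hj hs, ht⟩) ha ha0 haN
      (fun k hk t ht => hHγ t (hsub k (by omega) ht) ▸ (hcell j (by omega) k hk).2 ⟨hs, ht⟩)
      (fun k hk => hg j k hj (by omega))]
    refine Finset.sum_congr rfl fun k hk => ?_
    have hk := Finset.mem_range.1 hk
    rw [← hHγ _ (hsub k (by omega) (right_mem_Icc.2 (ha k.le_succ))),
      ← hHγ _ (hsub k (by omega) (left_mem_Icc.2 (ha k.le_succ)))]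
  have hgrid := sum_sub_eq_sum_sub_of_grid (n := n) ha (fun _ _ => convex_ball _ δ)
    (fun _ _ => isOpen_ball) (fun j hj k hk => hg j k hj hk)
    (fun j hj k hk => (hcell j (by omega) k (by omega)).2)
    (fun j hj => by rw [haN, ha0, hHper _ ⟨ha0 ▸ ha j.zero_le, haN ▸ ha hj⟩])
  rw [haN, ha0] at hgrid
  rw [hedge 0 n.zero_le 0 (ha0 ▸ left_mem_Icc.2 (ha zero_le_one)) γ₀ hγ₀ hH₀,
    hedge n le_rfl 1 (haN ▸ right_mem_Icc.2 (ha n.le_succ)) γ₁ hγ₁ hH₁, hgrid]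

end OneForms

theorem fderiv_apply_eq_sum_pd (F : E3 → ℝ) (x v : E3) :
    fderiv ℝ F x v = ∑ l, v l * pd l F x := by
  conv_lhs => rw [pi_eq_sum_univ' v]
  simp [pd, smul_eq_mul]

theorem pd_add {A B : E3 → ℝ} {x : E3} (l : Fin 3) (hA : DifferentiableAt ℝ A x)
    (hB : DifferentiableAt ℝ B x) : pd l (fun y => A y + B y) x = pd l A x + pd l B x := by
  simp [pd, fderiv_fun_add hA hB]

theorem pd_congr_of_eqOn {A B : E3 → ℝ} {Ω : Set E3} (hΩ : IsOpen Ω) (h : EqOn A B Ω) {x : E3}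
    (hx : x ∈ Ω) (l : Fin 3) : pd l A x = pd l B x := by
  simp only [pd, (Filter.eventuallyEq_of_mem (hΩ.mem_nhds hx) h).fderiv_eq]

theorem IsOpen.exists_eq_add_of_pd_eq {Ω : Set E3} (hΩ : IsOpen Ω) (hΩc : IsPreconnected Ω)
    {f g : E3 → ℝ} (hf : DifferentiableOn ℝ f Ω) (hg : DifferentiableOn ℝ g Ω)
    (hfg : ∀ x ∈ Ω, ∀ l, pd l f x = pd l g x) : ∃ a, EqOn f (g · + a) Ω :=
  hΩ.exists_eq_add_of_fderiv_eq hΩc hf hg fun x hx =>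
    ContinuousLinearMap.ext fun v => by simp only [fderiv_apply_eq_sum_pd, hfg x hx]

def coordForm (c : Fin 3 → E3 → ℝ) (x : E3) : E3 →L[ℝ] ℝ :=
  ∑ k, c k x • (ContinuousLinearMap.proj k : E3 →L[ℝ] ℝ)

theorem coordForm_apply (c : Fin 3 → E3 → ℝ) (x v : E3) : coordForm c x v = ∑ k, c k x * v k := by
  simp [coordForm]

theorem differentiableOn_coordForm {Ω : Set E3} {c : Fin 3 → E3 → ℝ}
    (hc : ∀ k, DifferentiableOn ℝ (c k) Ω) : DifferentiableOn ℝ (coordForm c) Ω :=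
  DifferentiableOn.fun_sum fun k _ => (hc k).smul_const _

theorem fderiv_coordForm_apply {c : Fin 3 → E3 → ℝ} {x : E3}
    (hc : ∀ k, DifferentiableAt ℝ (c k) x) (u v : E3) :
    fderiv ℝ (coordForm c) x u v = ∑ k, ∑ l, u l * pd l (c k) x * v k := by
  have : HasFDerivAt (coordForm c)
      (∑ k, (fderiv ℝ (c k) x).smulRight (ContinuousLinearMap.proj k : E3 →L[ℝ] ℝ)) x :=
    HasFDerivAt.fun_sum fun k _ =>
      (hc k).hasFDerivAt.smul_const (ContinuousLinearMap.proj k : E3 →L[ℝ] ℝ)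
  simp [this.fderiv, fderiv_apply_eq_sum_pd, Finset.sum_mul]

theorem isClosedOneFormOn_coordForm {Ω : Set E3} (hΩ : IsOpen Ω) {c : Fin 3 → E3 → ℝ}
    (hc : ∀ k, DifferentiableOn ℝ (c k) Ω) (hsymm : ∀ x ∈ Ω, ∀ k l, pd l (c k) x = pd k (c l) x) :
    IsClosedOneFormOn (coordForm c) Ω where
  differentiableOn := differentiableOn_coordForm hc
  fderiv_symm x hx u v := by
    have hcx := fun k => (hc k).differentiableAt (hΩ.mem_nhds hx)
    rw [fderiv_coordForm_apply hcx, fderiv_coordForm_apply hcx, Finset.sum_comm]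
    refine Fintype.sum_congr _ _ fun k => Fintype.sum_congr _ _ fun l => ?_
    rw [hsymm x hx l k]
    ring

theorem pd_strain_add_rotation_symm {Ω : Set E3} (hΩ : IsOpen Ω) {ε : Fin 3 → Fin 3 → E3 → ℝ}
    (hε : ∀ i j, DifferentiableOn ℝ (ε i j) Ω) (hsym : ∀ i j, ∀ x ∈ Ω, ε i j x = ε j i x)
    {ω : E3 → Matrix (Fin 3) (Fin 3) ℝ} (hω : ∀ i k, DifferentiableOn ℝ (fun x => ω x i k) Ω)
    (hgrad : ∀ x ∈ Ω, ∀ i k l : Fin 3, pd l (fun y => ω y i k) x = Efield ε i k l x)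
    {x : E3} (hx : x ∈ Ω) (i k l : Fin 3) :
    pd l (fun y => ε i k y + ω y i k) x = pd k (fun y => ε i l y + ω y i l) x := by
  have hd : ∀ f : E3 → ℝ, DifferentiableOn ℝ f Ω → DifferentiableAt ℝ f x := fun f hf =>
    hf.differentiableAt (hΩ.mem_nhds hx)
  rw [pd_add l (hd _ (hε i k)) (hd _ (hω i k)), pd_add k (hd _ (hε i l)) (hd _ (hω i l)),
    hgrad x hx, hgrad x hx, Efield, Efield, pd_congr_of_eqOn hΩ (hsym k l) hx i]
  ring

theorem weingarten_stmt7_general (Ω : Set E3) (hΩ : IsOpen Ω) (hconn : IsConnected Ω)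
    (ε : Fin 3 → Fin 3 → E3 → ℝ)
    (hreg : ∀ i j, ContDiffOn ℝ 2 (ε i j) Ω)
    (hsym : ∀ i j, ∀ x ∈ Ω, ε i j x = ε j i x)
    (ω₁ ω₂ : E3 → Matrix (Fin 3) (Fin 3) ℝ)
    (hω₁reg : ∀ i k, ContDiffOn ℝ 1 (fun x => ω₁ x i k) Ω)
    (hω₂reg : ∀ i k, ContDiffOn ℝ 1 (fun x => ω₂ x i k) Ω)
    (hω₁grad : ∀ x ∈ Ω, ∀ i k l : Fin 3, pd l (fun y => ω₁ y i k) x = Efield ε i k l x)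
    (hω₂grad : ∀ x ∈ Ω, ∀ i k l : Fin 3, pd l (fun y => ω₂ y i k) x = Efield ε i k l x)
    (γ₀ γ₁ : ℝ → E3) (h₀ : IsC1LoopIn γ₀ Ω) (h₁ : IsC1LoopIn γ₁ Ω)
    (hhom : FreelyHomotopicIn γ₀ γ₁ Ω) :
    ∀ i : Fin 3,
      (∫ t in (0:ℝ)..1, ∑ k, (ε i k (γ₀ t) + ω₁ (γ₀ t) i k) * deriv γ₀ t k) =
      (∫ t in (0:ℝ)..1, ∑ k, (ε i k (γ₁ t) + ω₂ (γ₁ t) i k) * deriv γ₁ t k) := by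
  intro i
  have hε : ∀ j k, DifferentiableOn ℝ (ε j k) Ω := fun j k =>
    (hreg j k).differentiableOn (by norm_num)
  have hω₁ : ∀ j k, DifferentiableOn ℝ (fun x => ω₁ x j k) Ω := fun j k =>
    (hω₁reg j k).differentiableOn one_ne_zero
  have hω₂ : ∀ j k, DifferentiableOn ℝ (fun x => ω₂ x j k) Ω := fun j k =>
    (hω₂reg j k).differentiableOn one_ne_zero
  set α₁ := coordForm fun k x => ε i k x + ω₁ x i k
  set α₂ := coordForm fun k x => ε i k x + ω₂ x i k
  have hα₁ : IsClosedOneFormOn α₁ Ω := isClosedOneFormOn_coordForm hΩ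
    (fun k => (hε i k).add (hω₁ i k)) fun x hx =>
      pd_strain_add_rotation_symm hΩ hε hsym hω₁ hω₁grad hx i
  choose A hA using fun k => hΩ.exists_eq_add_of_pd_eq hconn.isPreconnected (hω₁ i k) (hω₂ i k)
    fun x hx l => by rw [hω₁grad x hx, hω₂grad x hx]
  have hα : ∀ x ∈ Ω, α₁ x = α₂ x + coordForm (fun k _ => A k) 0 := fun x hx =>
    ContinuousLinearMap.ext fun v => by
      simp only [α₁, α₂, _root_.add_apply, coordForm_apply, hA _ hx,
        ← Finset.sum_add_distrib]
      exact Fintype.sum_congr _ _ fun k => by ring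
  obtain ⟨H, hH, hHΩ, hH₀, hH₁, hHper⟩ := hhom
  calc _ = ∫ t in (0:ℝ)..1, α₁ (γ₀ t) (deriv γ₀ t) := by simp only [α₁, coordForm_apply]
    _ = ∫ t in (0:ℝ)..1, α₁ (γ₁ t) (deriv γ₁ t) :=
      hα₁.integral_apply_deriv_eq_of_homotopy hΩ h₀.1 h₁.1 hH hHΩ hH₀ hH₁ hHper
    _ = ∫ t in (0:ℝ)..1, α₂ (γ₁ t) (deriv γ₁ t) :=
      integral_apply_deriv_eq_of_eq_add_const
        (differentiableOn_coordForm fun k => (hε i k).add (hω₂ i k)).continuousOn _ hα h₁.1 h₁.2.1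
        h₁.2.2
    _ = _ := by simp only [α₂, coordForm_apply]

/-- Burgers-vector well-definedness at small deformations: if `ω₁, ω₂` are C¹
skew-symmetric matrix fields on a connected open `Ω ⊆ ℝ³`, each with gradient equal to
the field `E` derived from a locally compatible strain `ε`, then the loop integrals of
`ε + ω₁` and `ε + ω₂` agree over any two freely homotopic C¹ loops in `Ω`. -/
theorem weingarten_stmt7 (Ω : Set E3) (hΩ : IsOpen Ω) (hconn : IsConnected Ω)
    (ε : Fin 3 → Fin 3 → E3 → ℝ)
    (hreg : ∀ i j, ContDiffOn ℝ 2 (ε i j) Ω)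
    (hsym : ∀ i j, ∀ x ∈ Ω, ε i j x = ε j i x)
    (hSV : StVenant ε Ω)
    (ω₁ ω₂ : E3 → Matrix (Fin 3) (Fin 3) ℝ)
    (hω₁reg : ∀ i k, ContDiffOn ℝ 1 (fun x => ω₁ x i k) Ω)
    (hω₂reg : ∀ i k, ContDiffOn ℝ 1 (fun x => ω₂ x i k) Ω)
    (hω₁skew : ∀ x ∈ Ω, (ω₁ x)ᵀ = -(ω₁ x))
    (hω₂skew : ∀ x ∈ Ω, (ω₂ x)ᵀ = -(ω₂ x))
    (hω₁grad : ∀ x ∈ Ω, ∀ i k l : Fin 3, pd l (fun y => ω₁ y i k) x = Efield ε i k l x)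
    (hω₂grad : ∀ x ∈ Ω, ∀ i k l : Fin 3, pd l (fun y => ω₂ y i k) x = Efield ε i k l x)
    (γ₀ γ₁ : ℝ → E3) (h₀ : IsC1LoopIn γ₀ Ω) (h₁ : IsC1LoopIn γ₁ Ω)
    (hhom : FreelyHomotopicIn γ₀ γ₁ Ω) :
    ∀ i : Fin 3,
      (∫ t in (0:ℝ)..1, ∑ k, (ε i k (γ₀ t) + ω₁ (γ₀ t) i k) * deriv γ₀ t k) =
      (∫ t in (0:ℝ)..1, ∑ k, (ε i k (γ₁ t) + ω₂ (γ₁ t) i k) * deriv γ₁ t k) :=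
  weingarten_stmt7_general Ω hΩ hconn ε hreg hsym ω₁ ω₂ hω₁reg hω₂reg hω₁grad hω₂grad γ₀ γ₁ h₀ h₁
    hhom
end
end

section
/- Let Ω ⊆ ℝ³ be a connected open set, let C be a twice continuously differentiable positive-definite symmetric 3×3 matrix field on Ω with Christoffel symbols Γ, and for each x let U(x) be the unique symmetric positive-definite square root of C(x). Let F₁, F₂ : Ω → ℝ^{3×3} be continuously differentiable solutions of the Pfaffian system F_{iα,β} = Σ_ρ Γ^ρ_{αβ} F_{iρ} satisfying F₁(x)ᵀ F₁(x) = F₂(x)ᵀ F₂(x) = C(x) for all x ∈ Ω, and set R_a(x) := F_a(x) U(x)⁻¹ for a = 1,2 (so each R_a(x) is orthogonal). Then for every C¹ loop γ in Ω and every x ∈ Ω: R₁(x)ᵀ ∫₀¹ F₁(γ(t)) γ'(t) dt = R₂(x)ᵀ ∫₀¹ F₂(γ(t)) γ'(t) dt; in particular the Euclidean norms of the two loop integrals (Burgers vectors) are equal. Furthermore, if F₁(x*) = F₂(x*) at some x* ∈ Ω, then ∫₀¹ F₁(γ(t)) γ'(t) dt = ∫₀¹ F₂(γ(t)) γ'(t)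 dt for every C¹ loop γ in Ω. -/
noncomputable section

open Matrix

/-- The Christoffel symbols `Γ^γ_{αβ}` of a positive-definite symmetric matrix field `C`:
`Γ^γ_{αβ} = ½ Σ_μ (C⁻¹)^{γμ}(C_{αμ,β} + C_{βμ,α} − C_{αβ,μ})`. -/
noncomputable def christoffel (C : E3 → Matrix (Fin 3) (Fin 3) ℝ)
    (γ α β : Fin 3) (x : E3) : ℝ :=
  (1 / 2) * ∑ μ, (C x)⁻¹ γ μ *
    (pd β (fun y => C y α μ) x + pd α (fun y => C y β μ) x - pd μ (fun y => C y α β) x)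

/-- `F` solves the Pfaffian system associated with `C` on `Ω`:
`F_{iα,β} = Σ_ρ Γ^ρ_{αβ} F_{iρ}` on `Ω`. -/
def SolvesPfaffian (C F : E3 → Matrix (Fin 3) (Fin 3) ℝ) (Ω : Set E3) : Prop :=
  ∀ x ∈ Ω, ∀ i α β : Fin 3,
    pd β (fun y => F y i α) x = ∑ ρ, christoffel C ρ α β x * F x i ρ

/-!
Since `F₁ᵀ F₁ = C` is invertible, `H = F₂ F₁⁻¹` is a differentiable matrix field with
`F₂ = H F₁`. Differentiating this identity and inserting the Pfaffian systems of `F₁` and `F₂`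
leaves `(∂_β H) F₁ = 0`, so `H` is a constant matrix `Q` on the connected set `Ω`, and
`F₁ᵀ F₁ = F₂ᵀ F₂` makes `Q` orthogonal. The loop integral of `F₂` is therefore `Q` times that
of `F₁`. This gives the three claims: `(Q F₁ U⁻¹)ᵀ Q = (F₁ U⁻¹)ᵀ`, `Q` preserves Euclidean
norms, and `Q = 1` as soon as `F₁` and `F₂` agree at one point.
-/

section MatrixCalculus

variable {E : Type*} [NormedAddCommGroup E] [NormedSpace ℝ E] {n : Type*} [Fintype n]
  [DecidableEq n] {M : E → Matrix n n ℝ} {x : E}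

theorem differentiableAt_det_of_entries (hM : ∀ i j, DifferentiableAt ℝ (fun y => M y i j) x) :
    DifferentiableAt ℝ (fun y => (M y).det) x := by
  simp only [Matrix.det_apply, Units.smul_def, zsmul_eq_mul]
  fun_prop

theorem differentiableAt_adjugate_of_entries (hM : ∀ i j, DifferentiableAt ℝ (fun y => M y i j) x)
    (i j : n) : DifferentiableAt ℝ (fun y => (M y).adjugate i j) x := by
  simp only [Matrix.adjugate_apply]
  refine differentiableAt_det_of_entries fun a b => ?_
  simp only [Matrix.updateRow_apply]
  split_ifs
  · exact differentiableAt_const _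
  · exact hM a b

theorem differentiableAt_inv_of_entries (hM : ∀ i j, DifferentiableAt ℝ (fun y => M y i j) x)
    (hdet : IsUnit (M x).det) (i j : n) : DifferentiableAt ℝ (fun y => (M y)⁻¹ i j) x := by
  simp only [Matrix.inv_def, Ring.inverse_eq_inv', Matrix.smul_apply, smul_eq_mul]
  exact ((differentiableAt_det_of_entries hM).inv hdet.ne_zero).mul
    (differentiableAt_adjugate_of_entries hM i j)

end MatrixCalculus

open Filter Topology

section PartialDerivatives

variable {f g : E3 → ℝ} {x : E3}

theorem pd_mul (hf : DifferentiableAt ℝ f x) (hg : DifferentiableAt ℝ g x) (β : Fin 3) :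
    pd β (fun y => f y * g y) x = pd β f x * g x + f x * pd β g x := by
  simp only [pd, fderiv_fun_mul hf hg, _root_.add_apply, _root_.smul_apply, smul_eq_mul]
  ring

theorem pd_sum {ι : Type*} {s : Finset ι} {f : ι → E3 → ℝ}
    (hf : ∀ i ∈ s, DifferentiableAt ℝ (f i) x) (β : Fin 3) :
    pd β (fun y => ∑ i ∈ s, f i y) x = ∑ i ∈ s, pd β (f i) x := by
  simp only [pd, fderiv_fun_sum hf, _root_.sum_apply]

theorem pd_congr_of_eventuallyEq (h : f =ᶠ[𝓝 x] g) (β : Fin 3) : pd β f x = pd β g x := by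
  simp only [pd, h.fderiv_eq]

theorem fderiv_eq_zero_of_pd_eq_zero (h : ∀ β, pd β f x = 0) : fderiv ℝ f x = 0 :=
  ContinuousLinearMap.coe_injective <| (Pi.basisFun ℝ (Fin 3)).ext fun β => by
    simpa [pd] using h β

end PartialDerivatives

section PfaffianSystem

variable {m n p : Type*} [Fintype n]

def pdMatrix (β : Fin 3) (A : E3 → Matrix m n ℝ) (x : E3) : Matrix m n ℝ :=
  Matrix.of fun i j => pd β (fun y => A y i j) x

theorem pdMatrix_mul {A : E3 → Matrix m n ℝ} {B : E3 → Matrix n p ℝ} {x : E3}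
    (hA : ∀ i j, DifferentiableAt ℝ (fun y => A y i j) x)
    (hB : ∀ i j, DifferentiableAt ℝ (fun y => B y i j) x) (β : Fin 3) :
    pdMatrix β (fun y => A y * B y) x = pdMatrix β A x * B x + A x * pdMatrix β B x := by
  ext i k
  simp only [pdMatrix, Matrix.of_apply, Matrix.mul_apply, Matrix.add_apply]
  rw [pd_sum (f := fun j y => A y i j * B y j k) fun j _ => (hA i j).mul (hB j k)]
  simp only [pd_mul (hA i _) (hB _ k), Finset.sum_add_distrib]

def christoffelMatrix (C : E3 → Matrix (Fin 3) (Fin 3) ℝ) (β : Fin 3) (x : E3) :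
    Matrix (Fin 3) (Fin 3) ℝ :=
  Matrix.of fun ρ α => christoffel C ρ α β x

theorem SolvesPfaffian.pdMatrix_eq {C F : E3 → Matrix (Fin 3) (Fin 3) ℝ} {Ω : Set E3}
    (hF : SolvesPfaffian C F Ω) {x : E3} (hx : x ∈ Ω) (β : Fin 3) :
    pdMatrix β F x = F x * christoffelMatrix C β x := by
  ext i α
  simp only [pdMatrix, christoffelMatrix, Matrix.of_apply, Matrix.mul_apply, hF x hx, mul_comm]


theorem SolvesPfaffian.pdMatrix_eq_zero_of_eventuallyEq_mul
    {C F₁ F₂ H : E3 → Matrix (Fin 3) (Fin 3) ℝ} {Ω : Set E3}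
    (hF₁ : SolvesPfaffian C F₁ Ω) (hF₂ : SolvesPfaffian C F₂ Ω) {x : E3} (hx : x ∈ Ω)
    (hF₁x : ∀ i j, DifferentiableAt ℝ (fun y => F₁ y i j) x)
    (hHx : ∀ i j, DifferentiableAt ℝ (fun y => H y i j) x) (hdet : IsUnit (F₁ x).det)
    (hF₂H : ∀ᶠ y in 𝓝 x, F₂ y = H y * F₁ y) (β : Fin 3) : pdMatrix β H x = 0 := by
  have hprod : pdMatrix β F₂ x = pdMatrix β H x * F₁ x + H x * pdMatrix β F₁ x := by
    rw [← pdMatrix_mul hHx hF₁x]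
    ext i j
    exact pd_congr_of_eventuallyEq (hF₂H.mono fun y hy => by rw [hy]) β
  rw [hF₂.pdMatrix_eq hx, hF₁.pdMatrix_eq hx, hF₂H.self_of_nhds, Matrix.mul_assoc,
    right_eq_add] at hprod
  rw [← Matrix.mul_nonsing_inv_cancel_right (F₁ x) (pdMatrix β H x) hdet, hprod, Matrix.zero_mul]

theorem SolvesPfaffian.exists_eq_mul {C F₁ F₂ : E3 → Matrix (Fin 3) (Fin 3) ℝ} {Ω : Set E3}
    (hΩ : IsOpen Ω) (hconn : IsPreconnected Ω)
    (hF₁d : ∀ i j, DifferentiableOn ℝ (fun y => F₁ y i j) Ω)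
    (hF₂d : ∀ i j, DifferentiableOn ℝ (fun y => F₂ y i j) Ω)
    (hF₁ : SolvesPfaffian C F₁ Ω) (hF₂ : SolvesPfaffian C F₂ Ω)
    (hdet : ∀ x ∈ Ω, IsUnit (F₁ x).det) : ∃ Q, ∀ x ∈ Ω, F₂ x = Q * F₁ x := by
  set H : E3 → Matrix (Fin 3) (Fin 3) ℝ := fun y => F₂ y * (F₁ y)⁻¹
  have hF₂H : ∀ y ∈ Ω, F₂ y = H y * F₁ y := fun y hy =>
    (Matrix.nonsing_inv_mul_cancel_right _ _ (hdet y hy)).symm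
  have hF₁x : ∀ x ∈ Ω, ∀ i j, DifferentiableAt ℝ (fun y => F₁ y i j) x := fun x hx i j =>
    (hF₁d i j).differentiableAt (hΩ.mem_nhds hx)
  have hHx : ∀ x ∈ Ω, ∀ i j, DifferentiableAt ℝ (fun y => H y i j) x := by
    intro x hx i j
    simp only [H, Matrix.mul_apply]
    exact DifferentiableAt.fun_sum fun k _ => ((hF₂d i k).differentiableAt (hΩ.mem_nhds hx)).mul
      (differentiableAt_inv_of_entries (hF₁x x hx) (hdet x hx) k j)
  have hpdH : ∀ x ∈ Ω, ∀ β, pdMatrix β H x = 0 := fun x hx =>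
    hF₁.pdMatrix_eq_zero_of_eventuallyEq_mul hF₂ hx (hF₁x x hx) (hHx x hx) (hdet x hx)
      (eventually_of_mem (hΩ.mem_nhds hx) hF₂H)
  have hconst : ∀ i j, ∃ q, ∀ x ∈ Ω, H x i j = q := fun i j =>
    hΩ.exists_is_const_of_fderiv_eq_zero hconn (fun x hx => (hHx x hx i j).differentiableWithinAt)
      fun x hx => fderiv_eq_zero_of_pd_eq_zero fun β => congrFun₂ (hpdH x hx β) i j
  choose q hq using hconst
  exact ⟨Matrix.of q, fun x hx => by
    rw [hF₂H x hx]; congr 1; ext i j; exact hq i j x hx⟩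

end PfaffianSystem

section LineIntegral

open MeasureTheory Set

variable {m n : Type*} [Fintype n]

theorem intervalIntegrable_mul_deriv_apply {a b : ℝ} (hab : a < b) {γ : ℝ → n → ℝ} {g : ℝ → ℝ}
    (hγ : ContDiffOn ℝ 1 γ (Icc a b)) (hg : ContinuousOn g (Icc a b)) (k : n) :
    IntervalIntegrable (fun t => g t * deriv γ t k) volume a b := by
  have hcont : ContinuousOn (fun t => g t * derivWithin γ (Icc a b) t k) (Icc a b) :=
    hg.mul <| (continuous_apply k).comp_continuousOn <|
      hγ.continuousOn_derivWithin (uniqueDiffOn_Icc hab) le_rfl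
  refine (hcont.intervalIntegrable_of_Icc hab.le).congr_ae ?_
  rw [uIoc_of_le hab.le, ← restrict_Ioo_eq_restrict_Ioc]
  filter_upwards [self_mem_ae_restrict measurableSet_Ioo] with t ht
  rw [derivWithin_of_mem_nhds (Icc_mem_nhds ht.1 ht.2)]

def lineIntegral (F : (n → ℝ) → Matrix m n ℝ) (γ : ℝ → n → ℝ) (i : m) : ℝ :=
  ∫ t in (0:ℝ)..1, ∑ k, F (γ t) i k * deriv γ t k

theorem lineIntegral_eq_mulVec [Fintype m] {l : Type*} {F : (n → ℝ) → Matrix m n ℝ}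
    {G : (n → ℝ) → Matrix l n ℝ} {Ω : Set (n → ℝ)} {γ : ℝ → n → ℝ}
    (hγ : ContDiffOn ℝ 1 γ (Icc 0 1)) (hγΩ : ∀ t ∈ Icc (0:ℝ) 1, γ t ∈ Ω)
    (hF : ∀ i k, ContinuousOn (fun x => F x i k) Ω) (Q : Matrix l m ℝ)
    (hG : ∀ x ∈ Ω, G x = Q * F x) : lineIntegral G γ = Q *ᵥ lineIntegral F γ := by
  funext i
  have hint : ∀ j, IntervalIntegrable (fun t => ∑ k, F (γ t) j k * deriv γ t k) volume 0 1 := by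
    intro j
    have h := IntervalIntegrable.sum Finset.univ fun k _ =>
      intervalIntegrable_mul_deriv_apply (g := fun t => F (γ t) j k) one_pos hγ
        ((hF j k).comp hγ.continuousOn hγΩ) k
    rwa [Finset.sum_fn] at h
  have hpointwise : ∀ t ∈ uIcc (0:ℝ) 1, ∑ k, G (γ t) i k * deriv γ t k
      = ∑ j, Q i j * ∑ k, F (γ t) j k * deriv γ t k := by
    intro t ht
    rw [uIcc_of_le zero_le_one] at ht
    simp only [hG (γ t) (hγΩ t ht), Matrix.mul_apply, Finset.sum_mul, Finset.mul_sum]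
    rw [Finset.sum_comm]
    simp only [mul_assoc]
  rw [lineIntegral, intervalIntegral.integral_congr hpointwise,
    intervalIntegral.integral_finsetSum fun j _ => (hint j).const_mul (Q i j)]
  simp only [intervalIntegral.integral_const_mul]
  rfl

end LineIntegral

namespace Matrix

variable {n : Type*} [Fintype n] [DecidableEq n] {R : Type*} [CommRing R]

theorem isUnit_det_of_posDef_transpose_mul_self {A : Matrix n n ℝ}
    (h : (Aᵀ * A).PosDef) : IsUnit A.det := by
  have hdet := (isUnit_iff_isUnit_det _).1 h.isUnit
  rw [det_mul] at hdet
  exact isUnit_of_mul_isUnit_right hdet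

theorem transpose_mul_self_eq_one_of_eq_mul {A B Q : Matrix n n R} (hA : IsUnit A.det)
    (hAB : Bᵀ * B = Aᵀ * A) (hB : B = Q * A) : Qᵀ * Q = 1 := by
  have hAT : IsUnit Aᵀ := (isUnit_iff_isUnit_det _).2 (by rwa [det_transpose])
  have hA' : IsUnit A := (isUnit_iff_isUnit_det _).2 hA
  refine hAT.mul_left_cancel (hA'.mul_right_cancel ?_)
  rw [hB, transpose_mul] at hAB
  simpa only [mul_assoc, mul_one] using hAB

theorem vecMul_mulVec_of_transpose_mul_self {Q : Matrix n n R} (hQ : Qᵀ * Q = 1)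
    (v : n → R) : (Q *ᵥ v) ᵥ* Q = v := by
  rw [← vecMul_transpose, vecMul_vecMul, hQ, vecMul_one]

theorem sum_mul_mulVec_of_transpose_mul_self {m : Type*} {Q : Matrix n n R}
    (hQ : Qᵀ * Q = 1) (M : Matrix n m R) (v : n → R) (i : m) :
    ∑ j, (Q * M) j i * (Q *ᵥ v) j = ∑ j, M j i * v j := by
  have h := congrFun (congrArg (· ᵥ* M) (vecMul_mulVec_of_transpose_mul_self hQ v)) i
  rw [vecMul_vecMul] at h
  simpa only [vecMul, dotProduct, mul_comm] using h

theorem sum_sq_mulVec_of_transpose_mul_self {Q : Matrix n n R} (hQ : Qᵀ * Q = 1)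
    (v : n → R) : ∑ i, (Q *ᵥ v) i ^ 2 = ∑ i, v i ^ 2 := by
  have h : (Q *ᵥ v) ⬝ᵥ (Q *ᵥ v) = v ⬝ᵥ v := by
    rw [dotProduct_mulVec, vecMul_mulVec_of_transpose_mul_self hQ]
  simpa only [dotProduct, sq] using h

end Matrix

theorem weingarten_stmt12_general (Ω : Set E3) (hΩ : IsOpen Ω) (hconn : IsConnected Ω)
    (C U F₁ F₂ : E3 → Matrix (Fin 3) (Fin 3) ℝ)
    (hpos : ∀ x ∈ Ω, (C x).PosDef)
    (hF₁reg : ∀ i a, ContDiffOn ℝ 1 (fun x => F₁ x i a) Ω)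
    (hF₂reg : ∀ i a, ContDiffOn ℝ 1 (fun x => F₂ x i a) Ω)
    (hF₁ : SolvesPfaffian C F₁ Ω) (hF₂ : SolvesPfaffian C F₂ Ω)
    (hC₁ : ∀ x ∈ Ω, (F₁ x)ᵀ * F₁ x = C x)
    (hC₂ : ∀ x ∈ Ω, (F₂ x)ᵀ * F₂ x = C x) :
    (∀ γ : ℝ → E3, IsC1LoopIn γ Ω → ∀ x ∈ Ω, ∀ i : Fin 3,
      (∑ j, (F₁ x * (U x)⁻¹) j i *
        ∫ t in (0:ℝ)..1, ∑ k, F₁ (γ t) j k * deriv γ t k) =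
      (∑ j, (F₂ x * (U x)⁻¹) j i *
        ∫ t in (0:ℝ)..1, ∑ k, F₂ (γ t) j k * deriv γ t k)) ∧
    (∀ γ : ℝ → E3, IsC1LoopIn γ Ω →
      Real.sqrt (∑ i, (∫ t in (0:ℝ)..1, ∑ k, F₁ (γ t) i k * deriv γ t k) ^ 2) =
      Real.sqrt (∑ i, (∫ t in (0:ℝ)..1, ∑ k, F₂ (γ t) i k * deriv γ t k) ^ 2)) ∧
    (∀ xstar ∈ Ω, F₁ xstar = F₂ xstar →
      ∀ γ : ℝ → E3, IsC1LoopIn γ Ω → ∀ i : Fin 3,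
        (∫ t in (0:ℝ)..1, ∑ k, F₁ (γ t) i k * deriv γ t k) =
        (∫ t in (0:ℝ)..1, ∑ k, F₂ (γ t) i k * deriv γ t k)) := by
  have hdet : ∀ x ∈ Ω, IsUnit (F₁ x).det := fun x hx =>
    Matrix.isUnit_det_of_posDef_transpose_mul_self (hC₁ x hx ▸ hpos x hx)
  obtain ⟨Q, hQ⟩ := SolvesPfaffian.exists_eq_mul hΩ hconn.isPreconnected
    (fun i j => (hF₁reg i j).differentiableOn one_ne_zero)
    (fun i j => (hF₂reg i j).differentiableOn one_ne_zero) hF₁ hF₂ hdet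
  obtain ⟨x₀, hx₀⟩ := hconn.nonempty
  have hQorth : Qᵀ * Q = 1 := Matrix.transpose_mul_self_eq_one_of_eq_mul (hdet x₀ hx₀)
    ((hC₂ x₀ hx₀).trans (hC₁ x₀ hx₀).symm) (hQ x₀ hx₀)
  have hL : ∀ γ, IsC1LoopIn γ Ω → lineIntegral F₂ γ = Q *ᵥ lineIntegral F₁ γ :=
    fun γ hγ => lineIntegral_eq_mulVec hγ.1 hγ.2.1 (fun i k => (hF₁reg i k).continuousOn) Q hQ
  refine ⟨fun γ hγ x hx i => ?_, fun γ hγ => ?_, fun xstar hxstar hF γ hγ i => ?_⟩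
  · have h := Matrix.sum_mul_mulVec_of_transpose_mul_self hQorth (F₁ x * (U x)⁻¹)
      (lineIntegral F₁ γ) i
    rw [← Matrix.mul_assoc, ← hQ x hx, ← hL γ hγ] at h
    exact h.symm
  · have h := Matrix.sum_sq_mulVec_of_transpose_mul_self hQorth (lineIntegral F₁ γ)
    rw [← hL γ hγ] at h
    exact congrArg Real.sqrt h.symm
  · have hQ1 : Q = 1 := calc
      Q = Q * F₁ xstar * (F₁ xstar)⁻¹ :=
        (Matrix.mul_nonsing_inv_cancel_right _ _ (hdet xstar hxstar)).symm
      _ = 1 := by rw [← hQ xstar hxstar, ← hF, Matrix.mul_nonsing_inv _ (hdet xstar hxstar)]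
    have h := congrFun (hL γ hγ) i
    rw [hQ1, Matrix.one_mulVec] at h
    exact h.symm

/-- Relation between Burgers vectors of two deformations compatible with the same `C`:
with `U` the symmetric positive-definite square root of `C` and rotations
`R_a = F_a U⁻¹`, for every C¹ loop `γ` in `Ω` and `x ∈ Ω` one has
`R₁(x)ᵀ ∫₀¹ F₁(γ(t)) γ'(t) dt = R₂(x)ᵀ ∫₀¹ F₂(γ(t)) γ'(t) dt`; in particular the
Euclidean norms of the loop integrals agree; and if `F₁ = F₂` at one point of `Ω`,
the loop integrals themselves agree. -/
theorem weingarten_stmt12 (Ω : Set E3) (hΩ : IsOpen Ω) (hconn : IsConnected Ω)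
    (C U F₁ F₂ : E3 → Matrix (Fin 3) (Fin 3) ℝ)
    (hCreg : ∀ a b, ContDiffOn ℝ 2 (fun x => C x a b) Ω)
    (hpos : ∀ x ∈ Ω, (C x).PosDef)
    (hsym : ∀ x ∈ Ω, (C x).IsSymm)
    (hU : ∀ x ∈ Ω, (U x).PosDef ∧ (U x).IsSymm ∧ U x * U x = C x)
    (hF₁reg : ∀ i a, ContDiffOn ℝ 1 (fun x => F₁ x i a) Ω)
    (hF₂reg : ∀ i a, ContDiffOn ℝ 1 (fun x => F₂ x i a) Ω)
    (hF₁ : SolvesPfaffian C F₁ Ω) (hF₂ : SolvesPfaffian C F₂ Ω)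
    (hC₁ : ∀ x ∈ Ω, (F₁ x)ᵀ * F₁ x = C x)
    (hC₂ : ∀ x ∈ Ω, (F₂ x)ᵀ * F₂ x = C x) :
    (∀ γ : ℝ → E3, IsC1LoopIn γ Ω → ∀ x ∈ Ω, ∀ i : Fin 3,
      (∑ j, (F₁ x * (U x)⁻¹) j i *
        ∫ t in (0:ℝ)..1, ∑ k, F₁ (γ t) j k * deriv γ t k) =
      (∑ j, (F₂ x * (U x)⁻¹) j i *
        ∫ t in (0:ℝ)..1, ∑ k, F₂ (γ t) j k * deriv γ t k)) ∧
    (∀ γ : ℝ → E3, IsC1LoopIn γ Ω →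
      Real.sqrt (∑ i, (∫ t in (0:ℝ)..1, ∑ k, F₁ (γ t) i k * deriv γ t k) ^ 2) =
      Real.sqrt (∑ i, (∫ t in (0:ℝ)..1, ∑ k, F₂ (γ t) i k * deriv γ t k) ^ 2)) ∧
    (∀ xstar ∈ Ω, F₁ xstar = F₂ xstar →
      ∀ γ : ℝ → E3, IsC1LoopIn γ Ω → ∀ i : Fin 3,
        (∫ t in (0:ℝ)..1, ∑ k, F₁ (γ t) i k * deriv γ t k) =
        (∫ t in (0:ℝ)..1, ∑ k, F₂ (γ t) i k * deriv γ t k)) :=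
  weingarten_stmt12_general Ω hΩ hconn C U F₁ F₂ hpos hF₁reg hF₂reg hF₁ hF₂ hC₁ hC₂
end
end
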